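/- arXiv:2006.06978 — 10 statements merged into one kernel-verified Lean document; each statement's English description precedes it below -/
import Mathlib

section
/- Let X be a non-negative random variable with survival function F̄ and let X_θ have survival function F̄^θ with θ > 1. Then ξ^w_{α,β}(X_θ) ≤ ξ^w_{α,β}(X) ≤ ξ^w_{α,β}(θX), for β ≥ 1 and β−1 < α < β. -/
/-!
Both inequalities come from pointwise comparisons of survival functions: `F̄ ^ θ ≤ F̄` because
`0 ≤ F̄ ≤ 1` and `θ ≥ 1`, and `F̄ ≤ F̄ (· / θ)` because `F̄` is antitone. Since `α + β - 1 ≥ 0`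
and `β - α > 0`, the generalized weighted survival entropy is monotone in the survival function.
-/

open MeasureTheory Set

noncomputable def genWeightedSurvivalEntropy (α β : ℝ) (G : ℝ → ℝ) : ℝ :=
  (1 / (β - α)) * Real.log (∫ x in Ioi (0 : ℝ), x * G x ^ (α + β - 1))

theorem genWeightedSurvivalEntropy_mono {α β : ℝ} {G H : ℝ → ℝ} (hαβ : α < β)
    (hexp : 0 ≤ α + β - 1) (hG : ∀ x ∈ Ioi (0 : ℝ), 0 ≤ G x)
    (hGH : ∀ x ∈ Ioi (0 : ℝ), G x ≤ H x)
    (hH : IntegrableOn (fun x => x * H x ^ (α + β - 1)) (Ioi 0))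
    (hpos : 0 < ∫ x in Ioi (0 : ℝ), x * G x ^ (α + β - 1)) :
    genWeightedSurvivalEntropy α β G ≤ genWeightedSurvivalEntropy α β H := by
  have hintegral : ∫ x in Ioi (0 : ℝ), x * G x ^ (α + β - 1) ≤
      ∫ x in Ioi (0 : ℝ), x * H x ^ (α + β - 1) :=
    setIntegral_mono_of_nonneg
      (fun x hx => mul_nonneg (le_of_lt hx) (Real.rpow_nonneg (hG x hx) _))
      (fun x hx => mul_le_mul_of_nonneg_left
        (Real.rpow_le_rpow (hG x hx) (hGH x hx) hexp) (le_of_lt hx))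
      hH
  exact mul_le_mul_of_nonneg_left (Real.log_le_log hpos hintegral)
    (one_div_nonneg.mpr (sub_nonneg.mpr hαβ.le))

theorem gwse_proportional_hazards_compare_general (α β θ : ℝ)
    (hβ : 1 ≤ β) (hα1 : β - 1 < α) (hα2 : α < β) (hθ : 1 < θ)
    (Fbar : ℝ → ℝ)
    (hFrange : ∀ x, 0 ≤ Fbar x ∧ Fbar x ≤ 1)
    (hFanti : Antitone Fbar)
    (hintX : IntegrableOn (fun x => x * Fbar x ^ (α + β - 1)) (Set.Ioi 0))
    (hintS : IntegrableOn (fun x => x * Fbar (x / θ) ^ (α + β - 1)) (Set.Ioi 0))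
    (hposX : 0 < ∫ x in Set.Ioi (0:ℝ), x * Fbar x ^ (α + β - 1))
    (hposθ : 0 < ∫ x in Set.Ioi (0:ℝ), x * (Fbar x ^ θ) ^ (α + β - 1)) :
    (1 / (β - α)) * Real.log (∫ x in Set.Ioi (0:ℝ), x * (Fbar x ^ θ) ^ (α + β - 1)) ≤
        (1 / (β - α)) * Real.log (∫ x in Set.Ioi (0:ℝ), x * Fbar x ^ (α + β - 1)) ∧
      (1 / (β - α)) * Real.log (∫ x in Set.Ioi (0:ℝ), x * Fbar x ^ (α + β - 1)) ≤
        (1 / (β - α)) * Real.log (∫ x in Set.Ioi (0:ℝ), x * Fbar (x / θ) ^ (α + β - 1)) := by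
  have hexp : 0 ≤ α + β - 1 := by linarith
  constructor
  · exact genWeightedSurvivalEntropy_mono (G := fun x => Fbar x ^ θ) hα2 hexp
      (fun x _ => Real.rpow_nonneg (hFrange x).1 θ)
      (fun x _ => Real.rpow_le_self_of_le_one (hFrange x).1 (hFrange x).2 hθ.le) hintX hposθ
  · exact genWeightedSurvivalEntropy_mono (H := fun x => Fbar (x / θ)) hα2 hexp
      (fun x _ => (hFrange x).1) (fun x hx => hFanti (div_le_self (le_of_lt hx) hθ.le))
      hintS hposX

/-- comparison of GWSE for `X`, `X_θ` (proportional hazards) and `θ•X`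
when `θ > 1`. -/
theorem gwse_proportional_hazards_compare (α β θ : ℝ)
    (hβ : 1 ≤ β) (hα1 : β - 1 < α) (hα2 : α < β) (hθ : 1 < θ)
    (Fbar : ℝ → ℝ)
    (hFrange : ∀ x, 0 ≤ Fbar x ∧ Fbar x ≤ 1)
    (hFanti : Antitone Fbar)
    (hintX : IntegrableOn (fun x => x * Fbar x ^ (α + β - 1)) (Set.Ioi 0))
    (hintθ : IntegrableOn (fun x => x * (Fbar x ^ θ) ^ (α + β - 1)) (Set.Ioi 0))
    (hintS : IntegrableOn (fun x => x * Fbar (x / θ) ^ (α + β - 1)) (Set.Ioi 0))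
    (hposX : 0 < ∫ x in Set.Ioi (0:ℝ), x * Fbar x ^ (α + β - 1))
    (hposθ : 0 < ∫ x in Set.Ioi (0:ℝ), x * (Fbar x ^ θ) ^ (α + β - 1))
    (hposS : 0 < ∫ x in Set.Ioi (0:ℝ), x * Fbar (x / θ) ^ (α + β - 1)) :
    (1 / (β - α)) * Real.log (∫ x in Set.Ioi (0:ℝ), x * (Fbar x ^ θ) ^ (α + β - 1)) ≤
        (1 / (β - α)) * Real.log (∫ x in Set.Ioi (0:ℝ), x * Fbar x ^ (α + β - 1)) ∧
      (1 / (β - α)) * Real.log (∫ x in Set.Ioi (0:ℝ), x * Fbar x ^ (α + β - 1)) ≤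
        (1 / (β - α)) * Real.log (∫ x in Set.Ioi (0:ℝ), x * Fbar (x / θ) ^ (α + β - 1)) :=
  gwse_proportional_hazards_compare_general α β θ hβ hα1 hα2 hθ Fbar hFrange hFanti hintX hintS
    hposX hposθ
end

section
/- For X exponentially distributed with rate λ > 0, the generalized dynamic weighted survival entropy equals ξ^w_{α,β}(X;t) = (1/(β−α))·log[(1 + tλ(α+β−1))/(λ²(α+β−1)²)] for all t ≥ 0. -/
/-! The survival ratio `F̄(x)/F̄(t)` raised to `p = α + β - 1` is `exp (-(λp) (x - t))`, so the
integral is `∫ x e^{-c(x-t)}` over `(t, ∞)` with `c = λp`; substituting `x = y + t` splits it into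
the first and zeroth Gamma moments `1/c²` and `t/c`. -/

open MeasureTheory Set Real

section ExpMoments

variable {c : ℝ}

lemma integral_exp_neg_mul_Ioi_zero (hc : 0 < c) :
    ∫ x in Ioi (0 : ℝ), exp (-(c * x)) = 1 / c := by
  simpa using integral_rpow_mul_exp_neg_mul_Ioi one_pos hc

lemma integral_mul_exp_neg_mul_Ioi_zero (hc : 0 < c) :
    ∫ x in Ioi (0 : ℝ), x * exp (-(c * x)) = 1 / c ^ 2 := by
  have h := integral_rpow_mul_exp_neg_mul_Ioi two_pos hc
  norm_num [Gamma_two] at h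
  simpa using h

lemma integrableOn_mul_exp_neg_mul_Ioi_zero (hc : 0 < c) :
    IntegrableOn (fun x ↦ x * exp (-(c * x))) (Ioi 0) := by
  simpa using integrableOn_rpow_mul_exp_neg_mul_rpow (p := 1) (s := 1) (b := c)
    (by norm_num) one_pos hc

lemma integral_mul_exp_neg_mul_sub_Ioi (hc : 0 < c) (t : ℝ) :
    ∫ x in Ioi t, x * exp (-(c * (x - t))) = (1 + t * c) / c ^ 2 := by
  have hshift := (measurePreserving_add_right volume t).setIntegral_preimage_emb
    (measurableEmbedding_addRight t) (fun x ↦ x * exp (-(c * (x - t)))) (Ioi t)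
  have hpre : (· + t) ⁻¹' Ioi t = Ioi 0 := by ext x; simp
  have hexp : IntegrableOn (fun x ↦ t * exp (-(c * x))) (Ioi 0) := by
    have h := (exp_neg_integrableOn_Ioi 0 hc).const_mul t
    simp only [neg_mul] at h
    exact h
  calc ∫ x in Ioi t, x * exp (-(c * (x - t)))
      = ∫ x in Ioi (0 : ℝ), (x * exp (-(c * x)) + t * exp (-(c * x))) := by
        rw [← hshift, hpre]
        simp only [add_sub_cancel_right, add_mul]
    _ = 1 / c ^ 2 + t * (1 / c) := by
        rw [integral_add (integrableOn_mul_exp_neg_mul_Ioi_zero hc) hexp, integral_const_mul,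
          integral_mul_exp_neg_mul_Ioi_zero hc, integral_exp_neg_mul_Ioi_zero hc]
    _ = (1 + t * c) / c ^ 2 := by field_simp

end ExpMoments

lemma exp_neg_mul_div_rpow (lam p x t : ℝ) :
    (exp (-(lam * x)) / exp (-(lam * t))) ^ p = exp (-((lam * p) * (x - t))) := by
  rw [← exp_sub, ← exp_mul]
  ring_nf

theorem gdwse_exponential_general (α β lam t : ℝ) (hlam : 0 < lam)
    (hβ : 1 ≤ β) (hα1 : β - 1 < α) :
    (1 / (β - α)) * Real.log (∫ x in Set.Ioi t,
        x * (Real.exp (-(lam * x)) / Real.exp (-(lam * t))) ^ (α + β - 1)) =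
      (1 / (β - α)) * Real.log
        ((1 + t * lam * (α + β - 1)) / (lam ^ 2 * (α + β - 1) ^ 2)) := by
  have hc : 0 < lam * (α + β - 1) := mul_pos hlam (by linarith)
  simp_rw [exp_neg_mul_div_rpow]
  rw [integral_mul_exp_neg_mul_sub_Ioi hc t, mul_pow, mul_assoc]

/-- GDWSE of the exponential distribution with rate `λ`. -/
theorem gdwse_exponential (α β lam t : ℝ) (hlam : 0 < lam) (ht : 0 ≤ t)
    (hβ : 1 ≤ β) (hα1 : β - 1 < α) (hα2 : α < β) :
    (1 / (β - α)) * Real.log (∫ x in Set.Ioi t,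
        x * (Real.exp (-(lam * x)) / Real.exp (-(lam * t))) ^ (α + β - 1)) =
      (1 / (β - α)) * Real.log
        ((1 + t * lam * (α + β - 1)) / (lam ^ 2 * (α + β - 1) ^ 2)) :=
  gdwse_exponential_general α β lam t hlam hβ hα1
end

section
/- Let X be a non-negative absolutely continuous random variable with differentiable survival function F̄, density f, and hazard rate λ_F(t) = f(t)/F̄(t). Then for t with F̄(t) > 0, the derivative of the generalized dynamic weighted survival entropy satisfies (β−α)·(d/dt)ξ^w_{α,β}(X;t) = (α+β−1)·λ_F(t) − t·exp[−(β−α)·ξ^w_{α,β}(X;t)]. -/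
/-!
Normalising by `F̄(t)^(α+β-1)` pulls out of the integral, so
`log ∫ₜ^∞ x (F̄(x)/F̄(t))^(α+β-1) dx = log I(t) - (α+β-1) log F̄(t)` with
`I(t) = ∫ₜ^∞ x F̄(x)^(α+β-1) dx`. Differentiating, `I'(t)/I(t) = -t F̄(t)^(α+β-1)/I(t)`,
which is `-t` times the reciprocal of the normalised integral, i.e. `-t exp(-(β-α) ξ(t))`,
while `-(α+β-1) F̄'(t)/F̄(t)` is `(α+β-1)` times the hazard rate.
-/

open MeasureTheory Set

theorem integral_mul_div_rpow {Ω : Type*} [MeasurableSpace Ω] (μ : Measure Ω)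
    {g F : Ω → ℝ} {c γ : ℝ} (hF : ∀ x, 0 ≤ F x) (hc : 0 ≤ c) :
    ∫ x, g x * (F x / c) ^ γ ∂μ = (c ^ γ)⁻¹ * ∫ x, g x * F x ^ γ ∂μ := by
  rw [← integral_const_mul]
  congr 1 with x
  rw [Real.div_rpow (hF x) hc]
  ring

theorem hasDerivAt_log_inv_rpow_mul {I F : ℝ → ℝ} {I' F' γ t : ℝ}
    (hI : HasDerivAt I I' t) (hF : HasDerivAt F F' t) (hIt : 0 < I t) (hFt : 0 < F t) :
    HasDerivAt (fun s => Real.log ((F s ^ γ)⁻¹ * I s)) (I' / I t - γ * (F' / F t)) t := by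
  have hsplit : (fun s => Real.log (I s) - γ * Real.log (F s)) =ᶠ[nhds t]
      fun s => Real.log ((F s ^ γ)⁻¹ * I s) := by
    filter_upwards [hI.continuousAt.eventually (eventually_gt_nhds hIt),
      hF.continuousAt.eventually (eventually_gt_nhds hFt)] with s hIs hFs
    rw [Real.log_mul (inv_pos.mpr (Real.rpow_pos_of_pos hFs γ)).ne' hIs.ne', Real.log_inv,
      Real.log_rpow hFs]
    ring
  exact ((hI.log hIt.ne').sub ((hF.log hFt.ne').const_mul γ)).congr_of_eventuallyEq
    hsplit.symm

theorem Real.exp_neg_mul_one_div_mul_log {c y : ℝ} (hc : c ≠ 0) (hy : 0 < y) :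
    Real.exp (-c * (1 / c * Real.log y)) = y⁻¹ := by
  rw [show -c * (1 / c * Real.log y) = -Real.log y by field_simp, Real.exp_neg,
    Real.exp_log hy]

theorem gdwse_deriv_general (α β t : ℝ)
    (hα2 : α < β)
    (Fbar f : ℝ → ℝ)
    (hFpos : ∀ s, 0 < Fbar s)
    (hFderiv : HasDerivAt Fbar (-f t) t)
    (hFTC : HasDerivAt (fun s => ∫ x in Set.Ioi s, x * Fbar x ^ (α + β - 1))
      (-(t * Fbar t ^ (α + β - 1))) t)
    (hpos : 0 < ∫ x in Set.Ioi t, x * Fbar x ^ (α + β - 1)) :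
    HasDerivAt
      (fun s => (1 / (β - α)) *
        Real.log (∫ x in Set.Ioi s, x * (Fbar x / Fbar s) ^ (α + β - 1)))
      ((1 / (β - α)) * ((α + β - 1) * (f t / Fbar t) -
        t * Real.exp (-(β - α) * ((1 / (β - α)) *
          Real.log (∫ x in Set.Ioi t, x * (Fbar x / Fbar t) ^ (α + β - 1))))))
      t := by
  set γ := α + β - 1
  set I := fun s => ∫ x in Ioi s, x * Fbar x ^ γ
  have hnormalise (s : ℝ) :
      ∫ x in Ioi s, x * (Fbar x / Fbar s) ^ γ = (Fbar s ^ γ)⁻¹ * I s :=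
    integral_mul_div_rpow _ (fun x => (hFpos x).le) (hFpos s).le
  have hexp : Real.exp (-(β - α) * ((1 / (β - α)) * Real.log ((Fbar t ^ γ)⁻¹ * I t)))
      = Fbar t ^ γ / I t := by
    rw [Real.exp_neg_mul_one_div_mul_log (sub_pos.mpr hα2).ne'
      (mul_pos (inv_pos.mpr (Real.rpow_pos_of_pos (hFpos t) γ)) hpos), mul_inv, inv_inv,
      div_eq_mul_inv]
  simp only [hnormalise, hexp]
  refine ((hasDerivAt_log_inv_rpow_mul hFTC hFderiv hpos (hFpos t)).const_mul
    (1 / (β - α))).congr_deriv ?_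
  ring

/-- the derivative of the generalized dynamic weighted survival entropy
satisfies `(β-α)·ξ'(t) = (α+β-1)·λ_F(t) − t·exp[−(β−α)·ξ(t)]`. -/
theorem gdwse_deriv (α β t : ℝ) (ht0 : 0 ≤ t)
    (hβ : 1 ≤ β) (hα1 : β - 1 < α) (hα2 : α < β)
    (Fbar f : ℝ → ℝ)
    (hFpos : ∀ s, 0 < Fbar s)
    (hFderiv : HasDerivAt Fbar (-f t) t)
    (hint : ∀ s, IntegrableOn (fun x => x * Fbar x ^ (α + β - 1)) (Set.Ioi s))
    (hFTC : HasDerivAt (fun s => ∫ x in Set.Ioi s, x * Fbar x ^ (α + β - 1))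
      (-(t * Fbar t ^ (α + β - 1))) t)
    (hpos : 0 < ∫ x in Set.Ioi t, x * Fbar x ^ (α + β - 1)) :
    HasDerivAt
      (fun s => (1 / (β - α)) *
        Real.log (∫ x in Set.Ioi s, x * (Fbar x / Fbar s) ^ (α + β - 1)))
      ((1 / (β - α)) * ((α + β - 1) * (f t / Fbar t) -
        t * Real.exp (-(β - α) * ((1 / (β - α)) *
          Real.log (∫ x in Set.Ioi t, x * (Fbar x / Fbar t) ^ (α + β - 1))))))
      t :=
  gdwse_deriv_general α β t hα2 Fbar f hFpos hFderiv hFTC hpos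
end

section
/- If X and Y are non-negative random variables with F̄(x) ≤ Ḡ(x) for all x ≥ 0 (i.e., X ≤ Y in the usual stochastic order), then ξ^w_{α,β}(X) ≤ ξ^w_{α,β}(Y). -/
open MeasureTheory Set

/-- The generalized weighted survival entropy `ξ^w_{α,β}` of a survival function `Hbar`. -/
noncomputable def weightedSurvivalEntropy (α β : ℝ) (Hbar : ℝ → ℝ) : ℝ :=
  1 / (β - α) * Real.log (∫ x in Ioi (0:ℝ), x * Hbar x ^ (α + β - 1))

theorem setIntegral_mul_rpow_mono {s : Set ℝ} (hs : s ⊆ Ici 0) {p : ℝ} (hp : 0 ≤ p)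
    {f g : ℝ → ℝ} (hf : ∀ x ∈ s, 0 ≤ f x) (hfg : ∀ x ∈ s, f x ≤ g x)
    (hg : IntegrableOn (fun x => x * g x ^ p) s) :
    ∫ x in s, x * f x ^ p ≤ ∫ x in s, x * g x ^ p := by
  refine setIntegral_mono_of_nonneg (fun x hx => ?_) (fun x hx => ?_) hg
  · exact mul_nonneg (hs hx) (Real.rpow_nonneg (hf x hx) p)
  · exact mul_le_mul_of_nonneg_left (Real.rpow_le_rpow (hf x hx) (hfg x hx) hp) (hs hx)

theorem weightedSurvivalEntropy_mono {α β : ℝ} (hαβ : α < β) (hp : 0 ≤ α + β - 1)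
    {Fbar Gbar : ℝ → ℝ} (hF : ∀ x ∈ Ioi (0:ℝ), 0 ≤ Fbar x)
    (hst : ∀ x ∈ Ioi (0:ℝ), Fbar x ≤ Gbar x)
    (hintG : IntegrableOn (fun x => x * Gbar x ^ (α + β - 1)) (Ioi 0))
    (hposF : 0 < ∫ x in Ioi (0:ℝ), x * Fbar x ^ (α + β - 1)) :
    weightedSurvivalEntropy α β Fbar ≤ weightedSurvivalEntropy α β Gbar := by
  have hintegral := setIntegral_mul_rpow_mono Ioi_subset_Ici_self hp hF hst hintG
  exact mul_le_mul_of_nonneg_left (Real.log_le_log hposF hintegral)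
    (one_div_nonneg.mpr (sub_nonneg.mpr hαβ.le))

theorem st_order_implies_wse_order_general (α β : ℝ)
    (hβ : 1 ≤ β) (hα1 : β - 1 < α) (hα2 : α < β)
    (Fbar Gbar : ℝ → ℝ)
    (hFrange : ∀ x, 0 ≤ Fbar x ∧ Fbar x ≤ 1)
    (hst : ∀ x, 0 ≤ x → Fbar x ≤ Gbar x)
    (hintG : IntegrableOn (fun x => x * Gbar x ^ (α + β - 1)) (Set.Ioi 0))
    (hposF : 0 < ∫ x in Set.Ioi (0:ℝ), x * Fbar x ^ (α + β - 1)) :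
    (1 / (β - α)) * Real.log (∫ x in Set.Ioi (0:ℝ), x * Fbar x ^ (α + β - 1)) ≤
      (1 / (β - α)) * Real.log (∫ x in Set.Ioi (0:ℝ), x * Gbar x ^ (α + β - 1)) :=
  weightedSurvivalEntropy_mono hα2 (by linarith) (fun x _ => (hFrange x).1)
    (fun x hx => hst x (le_of_lt hx)) hintG hposF

/-- the usual stochastic order implies the generalized weighted
survival entropy order. -/
theorem st_order_implies_wse_order (α β : ℝ)
    (hβ : 1 ≤ β) (hα1 : β - 1 < α) (hα2 : α < β)
    (Fbar Gbar : ℝ → ℝ)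
    (hFrange : ∀ x, 0 ≤ Fbar x ∧ Fbar x ≤ 1)
    (hGrange : ∀ x, 0 ≤ Gbar x ∧ Gbar x ≤ 1)
    (hst : ∀ x, 0 ≤ x → Fbar x ≤ Gbar x)
    (hintF : IntegrableOn (fun x => x * Fbar x ^ (α + β - 1)) (Set.Ioi 0))
    (hintG : IntegrableOn (fun x => x * Gbar x ^ (α + β - 1)) (Set.Ioi 0))
    (hposF : 0 < ∫ x in Set.Ioi (0:ℝ), x * Fbar x ^ (α + β - 1))
    (hposG : 0 < ∫ x in Set.Ioi (0:ℝ), x * Gbar x ^ (α + β - 1)) :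
    (1 / (β - α)) * Real.log (∫ x in Set.Ioi (0:ℝ), x * Fbar x ^ (α + β - 1)) ≤
      (1 / (β - α)) * Real.log (∫ x in Set.Ioi (0:ℝ), x * Gbar x ^ (α + β - 1)) :=
  st_order_implies_wse_order_general α β hβ hα1 hα2 Fbar Gbar hFrange hst hintG hposF
end

section
/- If X and Y are non-negative random variables with hazard rate ordering X ≤_hr Y (i.e., Ḡ(t)/F̄(t) is increasing in t, equivalently F̄(x)/F̄(t) ≤ Ḡ(x)/Ḡ(t) for all x ≥ t), then ξ^w_{α,β}(X;t) ≤ ξ^w_{α,β}(Y;t) for all t with F̄(t) > 0 and Ḡ(t) > 0. -/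
open MeasureTheory Set

theorem setIntegral_mul_rpow_mono_on {X : Type*} [MeasurableSpace X] {μ : Measure X}
    {s : Set X} (hs : MeasurableSet s) {w f g : X → ℝ} {p : ℝ} (hp : 0 ≤ p)
    (hfi : IntegrableOn (fun x => w x * f x ^ p) s μ)
    (hgi : IntegrableOn (fun x => w x * g x ^ p) s μ)
    (hw : ∀ x ∈ s, 0 ≤ w x) (hf : ∀ x ∈ s, 0 ≤ f x) (hfg : ∀ x ∈ s, f x ≤ g x) :
    ∫ x in s, w x * f x ^ p ∂μ ≤ ∫ x in s, w x * g x ^ p ∂μ :=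
  setIntegral_mono_on hfi hgi hs fun x hx =>
    mul_le_mul_of_nonneg_left (Real.rpow_le_rpow (hf x hx) (hfg x hx) hp) (hw x hx)

theorem hr_order_implies_dwse_order_general (α β : ℝ)
    (hβ : 1 ≤ β) (hα1 : β - 1 < α) (hα2 : α < β)
    (Fbar Gbar : ℝ → ℝ)
    (hFrange : ∀ x, 0 ≤ Fbar x ∧ Fbar x ≤ 1)
    (hhr : ∀ t x, 0 ≤ t → t ≤ x → 0 < Fbar t → 0 < Gbar t →
      Fbar x / Fbar t ≤ Gbar x / Gbar t)
    (hintF : ∀ t, 0 ≤ t →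
      IntegrableOn (fun x => x * (Fbar x / Fbar t) ^ (α + β - 1)) (Set.Ioi t))
    (hintG : ∀ t, 0 ≤ t →
      IntegrableOn (fun x => x * (Gbar x / Gbar t) ^ (α + β - 1)) (Set.Ioi t))
    (hposF : ∀ t, 0 ≤ t →
      0 < ∫ x in Set.Ioi t, x * (Fbar x / Fbar t) ^ (α + β - 1)) :
    ∀ t, 0 ≤ t → 0 < Fbar t → 0 < Gbar t →
      (1 / (β - α)) * Real.log (∫ x in Set.Ioi t, x * (Fbar x / Fbar t) ^ (α + β - 1)) ≤
        (1 / (β - α)) * Real.log (∫ x in Set.Ioi t, x * (Gbar x / Gbar t) ^ (α + β - 1)) := by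
  intro t ht hF hG
  have hp : 0 ≤ α + β - 1 := by linarith
  have hint_le := setIntegral_mul_rpow_mono_on measurableSet_Ioi hp (hintF t ht) (hintG t ht)
    (fun x hx => ht.trans (le_of_lt hx)) (fun x _ => div_nonneg (hFrange x).1 hF.le)
    (fun x hx => hhr t x ht (le_of_lt hx) hF hG)
  have hscale : 0 ≤ 1 / (β - α) := one_div_nonneg.mpr (by linarith)
  exact mul_le_mul_of_nonneg_left (Real.log_le_log (hposF t ht) hint_le) hscale

/-- the hazard rate order implies the generalized dynamic weighted
survival entropy order at every time `t`. -/
theorem hr_order_implies_dwse_order (α β : ℝ)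
    (hβ : 1 ≤ β) (hα1 : β - 1 < α) (hα2 : α < β)
    (Fbar Gbar : ℝ → ℝ)
    (hFrange : ∀ x, 0 ≤ Fbar x ∧ Fbar x ≤ 1)
    (hGrange : ∀ x, 0 ≤ Gbar x ∧ Gbar x ≤ 1)
    (hhr : ∀ t x, 0 ≤ t → t ≤ x → 0 < Fbar t → 0 < Gbar t →
      Fbar x / Fbar t ≤ Gbar x / Gbar t)
    (hintF : ∀ t, 0 ≤ t →
      IntegrableOn (fun x => x * (Fbar x / Fbar t) ^ (α + β - 1)) (Set.Ioi t))
    (hintG : ∀ t, 0 ≤ t →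
      IntegrableOn (fun x => x * (Gbar x / Gbar t) ^ (α + β - 1)) (Set.Ioi t))
    (hposF : ∀ t, 0 ≤ t →
      0 < ∫ x in Set.Ioi t, x * (Fbar x / Fbar t) ^ (α + β - 1))
    (hposG : ∀ t, 0 ≤ t →
      0 < ∫ x in Set.Ioi t, x * (Gbar x / Gbar t) ^ (α + β - 1)) :
    ∀ t, 0 ≤ t → 0 < Fbar t → 0 < Gbar t →
      (1 / (β - α)) * Real.log (∫ x in Set.Ioi t, x * (Fbar x / Fbar t) ^ (α + β - 1)) ≤
        (1 / (β - α)) * Real.log (∫ x in Set.Ioi t, x * (Gbar x / Gbar t) ^ (α + β - 1)) :=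
  hr_order_implies_dwse_order_general α β hβ hα1 hα2 Fbar Gbar hFrange hhr hintF hintG hposF
end

section
/- Let X be a non-negative random variable with survival function F̄ and suppose ξ^w_{α,β}(X;t) = c for all t ≥ 0 for some constant c (where F̄(t) > 0 for all t). If X is absolutely continuous with hazard rate λ_F, then λ_F(t) = t·e^{(α−β)c}/(α+β−1) for all t > 0; i.e., X has a Rayleigh distribution with F̄(t) = e^{−λt²} where λ = e^{(α−β)c}/(2(α+β−1)). Conversely, if F̄(t) = e^{−λt²} with λ > 0, then ξ^w_{α,β}(X;t) is constant in t. -/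
open MeasureTheory Set

/-- The generalized dynamic weighted survival entropy of a random variable with
survival function `Fbar`, at time `t`. -/
noncomputable def gdwse (α β : ℝ) (Fbar : ℝ → ℝ) (t : ℝ) : ℝ :=
  (1 / (β - α)) * Real.log (∫ x in Set.Ioi t, x * (Fbar x / Fbar t) ^ (α + β - 1))

/-!
A constant GDWSE makes the derivative identity collapse to
`(α + β - 1) λ_F(t) = t e^{(α - β) c}`, so the hazard rate is linear and integrating it gives
the Rayleigh survival function. Conversely, for `F̄(x) = e^{-λx²}` the ratio
`(F̄(x)/F̄(t))^{α+β-1}` is `e^{-λ(α+β-1)(x² - t²)}`, and `∫_t^∞ x e^{-a x²} dx = e^{-a t²}/(2a)`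
cancels the factor `e^{λ(α+β-1)t²}`, leaving an integral independent of `t`.
-/

open Filter Topology

theorem integral_Ioi_mul_exp_neg_mul_sq {a : ℝ} (ha : 0 < a) (t : ℝ) :
    ∫ x in Ioi t, x * Real.exp (-a * x ^ 2) = Real.exp (-a * t ^ 2) / (2 * a) := by
  have hderiv : ∀ x ∈ Ici t, HasDerivAt (fun x => -Real.exp (-a * x ^ 2) / (2 * a))
      (x * Real.exp (-a * x ^ 2)) x := fun x _ => by
    refine (((hasDerivAt_pow 2 x).const_mul (-a)).exp.neg.div_const (2 * a)).congr_deriv ?_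
    field_simp
    ring
  have hlim : Tendsto (fun x => -Real.exp (-a * x ^ 2) / (2 * a)) atTop (𝓝 0) := by
    have hexp : Tendsto (fun x : ℝ => -a * x ^ 2) atTop atBot :=
      (tendsto_pow_atTop two_ne_zero).const_mul_atTop_of_neg (neg_neg_of_pos ha)
    simpa using (Real.tendsto_exp_atBot.comp hexp).neg.div_const (2 * a)
  rw [integral_Ioi_of_hasDerivAt_of_tendsto' hderiv
    (integrable_mul_exp_neg_mul_sq ha).integrableOn hlim]
  ring

theorem gdwse_rayleigh {α β lam : ℝ} (hlam : 0 < lam) (hγ : 0 < α + β - 1) (t : ℝ) :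
    gdwse α β (fun x => Real.exp (-(lam * x ^ 2))) t =
      1 / (β - α) * Real.log (1 / (2 * (lam * (α + β - 1)))) := by
  unfold gdwse
  set γ := α + β - 1
  have hratio : ∀ x : ℝ, x * (Real.exp (-(lam * x ^ 2)) / Real.exp (-(lam * t ^ 2))) ^ γ =
      x * Real.exp (-(lam * γ) * x ^ 2) * Real.exp (lam * γ * t ^ 2) := fun x => by
    rw [← Real.exp_sub, ← Real.exp_mul, mul_assoc, ← Real.exp_add]
    ring_nf
  beta_reduce
  simp_rw [hratio]
  rw [integral_mul_const, integral_Ioi_mul_exp_neg_mul_sq (mul_pos hlam hγ),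
    div_mul_eq_mul_div _ _ (Real.exp _),
    ← Real.exp_add, neg_mul, neg_add_cancel, Real.exp_zero]

theorem setIntegral_Ioc_zero_eq_of_eq_id_mul {h : ℝ → ℝ} {k t : ℝ} (ht : 0 ≤ t)
    (hh : ∀ u ∈ Ioc 0 t, h u = u * k) :
    ∫ u in Ioc 0 t, h u = k / 2 * t ^ 2 := by
  rw [setIntegral_congr_fun measurableSet_Ioc hh, ← intervalIntegral.integral_of_le ht,
    intervalIntegral.integral_mul_const, integral_id]
  ring

theorem gdwse_constant_iff_rayleigh_general (α β : ℝ)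
    (hβ : 1 ≤ β) (hα1 : β - 1 < α) :
    (∀ (Fbar f : ℝ → ℝ) (c : ℝ),
      (∀ t, 0 < Fbar t) →
      -- the hazard rate determines the survival function
      (∀ t, 0 ≤ t → Fbar t = Real.exp (-(∫ u in Set.Ioc (0:ℝ) t, f u / Fbar u))) →
      -- derivative identity for the GDWSE (Theorem 2.3 of the paper)
      (∀ t, 0 < t → (β - α) * deriv (gdwse α β Fbar) t =
        (α + β - 1) * (f t / Fbar t) -
          t * Real.exp (-(β - α) * gdwse α β Fbar t)) →
      -- constancy of the GDWSE
      (∀ t, 0 ≤ t → gdwse α β Fbar t = c) →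
      (∀ t, 0 < t → f t / Fbar t = t * Real.exp ((α - β) * c) / (α + β - 1)) ∧
        (∀ t, 0 ≤ t →
          Fbar t = Real.exp (-(Real.exp ((α - β) * c) / (2 * (α + β - 1))) * t ^ 2)))
    ∧
    (∀ lam : ℝ, 0 < lam → ∀ s t : ℝ, 0 ≤ s → 0 ≤ t →
      gdwse α β (fun x => Real.exp (-(lam * x ^ 2))) s =
        gdwse α β (fun x => Real.exp (-(lam * x ^ 2))) t) := by
  have hγ : 0 < α + β - 1 := by linarith
  refine ⟨fun Fbar f c _ hsurv hderiv hconst => ?_,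
    fun lam hlam s t _ _ => by rw [gdwse_rayleigh hlam hγ, gdwse_rayleigh hlam hγ]⟩
  have hhazard : ∀ t, 0 < t → f t / Fbar t = t * Real.exp ((α - β) * c) / (α + β - 1) := by
    intro t ht
    have hflat : deriv (gdwse α β Fbar) t = 0 := by
      have hloc : gdwse α β Fbar =ᶠ[𝓝 t] fun _ => c :=
        eventually_of_mem (Ioi_mem_nhds ht) fun x hx => hconst x (le_of_lt hx)
      rw [hloc.deriv_eq, deriv_const]
    have hid := hderiv t ht
    rw [hflat, hconst t ht.le, mul_zero, neg_sub] at hid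
    rw [eq_div_iff hγ.ne']
    linarith
  refine ⟨hhazard, fun t ht => ?_⟩
  rw [hsurv t ht, setIntegral_Ioc_zero_eq_of_eq_id_mul ht fun u hu => by
    rw [hhazard u hu.1, mul_div_assoc]]
  congr 1
  field_simp

/-- `X` has constant GDWSE iff it has a Rayleigh distribution.
Forward: if `ξ^w_{α,β}(X;t) = c` for all `t ≥ 0`, then the hazard rate satisfies
`λ_F(t) = t·e^{(α−β)c}/(α+β−1)`, i.e. `F̄(t) = e^{−λt²}` with
`λ = e^{(α−β)c}/(2(α+β−1))`.  Converse: a Rayleigh survival function has constant GDWSE. -/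
theorem gdwse_constant_iff_rayleigh (α β : ℝ)
    (hβ : 1 ≤ β) (hα1 : β - 1 < α) (hα2 : α < β) :
    (∀ (Fbar f : ℝ → ℝ) (c : ℝ),
      (∀ t, 0 < Fbar t) →
      -- the hazard rate determines the survival function
      (∀ t, 0 ≤ t → Fbar t = Real.exp (-(∫ u in Set.Ioc (0:ℝ) t, f u / Fbar u))) →
      -- derivative identity for the GDWSE (Theorem 2.3 of the paper)
      (∀ t, 0 < t → (β - α) * deriv (gdwse α β Fbar) t =
        (α + β - 1) * (f t / Fbar t) -
          t * Real.exp (-(β - α) * gdwse α β Fbar t)) →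
      -- constancy of the GDWSE
      (∀ t, 0 ≤ t → gdwse α β Fbar t = c) →
      (∀ t, 0 < t → f t / Fbar t = t * Real.exp ((α - β) * c) / (α + β - 1)) ∧
        (∀ t, 0 ≤ t →
          Fbar t = Real.exp (-(Real.exp ((α - β) * c) / (2 * (α + β - 1))) * t ^ 2)))
    ∧
    (∀ lam : ℝ, 0 < lam → ∀ s t : ℝ, 0 ≤ s → 0 ≤ t →
      gdwse α β (fun x => Real.exp (-(lam * x ^ 2))) s =
        gdwse α β (fun x => Real.exp (-(lam * x ^ 2))) t) :=
  gdwse_constant_iff_rayleigh_general α β hβ hα1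
end

section
/- Let X and Y be non-negative absolutely continuous random variables with common support [0,∞), cdfs F, G and positive continuous densities f, g. If for all n ≥ 1 the generalized weighted survival entropies of the sample minima agree, ξ^w_{α,β}(X_{1:n}) = ξ^w_{α,β}(Y_{1:n}), then F = G. -/
/-!
Under the substitution `v = F̄(x)^c` with `c = α + β - 1`, the integral `∫ x F̄(x)^(n c) dx`
is the `(n-1)`-st moment of the image of the measure `x F̄(x)^c dx` on `(0, ∞)`, a finite
measure on `[0, 1]`. Equal entropies for all `n` give equal moments, hence (Weierstrass) equal
image measures for `F` and `G`. Integrating `t⁻¹ 𝟙(t > s)` against the image measure gives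
`a² / 2`, where `F̄(a)^c = s`; so `F̄^c` and `Ḡ^c` take every level `s` at the same point.
-/

open MeasureTheory Set Filter

namespace MeasureTheory.Measure

variable {μ ν : Measure ℝ} {a b : ℝ}

theorem integrable_of_ae_mem_Icc [IsFiniteMeasure μ] (hμ : ∀ᵐ x ∂μ, x ∈ Icc a b)
    {f : ℝ → ℝ} (hf : ContinuousOn f (Icc a b)) : Integrable f μ := by
  rw [← restrict_eq_self_of_ae_mem hμ]
  exact hf.integrableOn_Icc

theorem integral_eval_eq_sum_moments [IsFiniteMeasure μ] (hμ : ∀ᵐ x ∂μ, x ∈ Icc a b)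
    (p : Polynomial ℝ) :
    ∫ x, p.eval x ∂μ = ∑ i ∈ Finset.range (p.natDegree + 1), p.coeff i * ∫ x, x ^ i ∂μ := by
  simp_rw [Polynomial.eval_eq_sum_range]
  rw [integral_finsetSum _ fun i _ =>
    ((integrable_of_ae_mem_Icc hμ (continuousOn_pow i)).const_mul (p.coeff i))]
  simp_rw [integral_const_mul]

theorem dist_integral_le_of_forall_mem_Icc [IsFiniteMeasure μ] (hμ : ∀ᵐ x ∂μ, x ∈ Icc a b)
    {f g : ℝ → ℝ} (hf : ContinuousOn f (Icc a b)) (hg : ContinuousOn g (Icc a b)) {δ : ℝ}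
    (hfg : ∀ x ∈ Icc a b, dist (f x) (g x) ≤ δ) :
    dist (∫ x, f x ∂μ) (∫ x, g x ∂μ) ≤ δ * μ.real univ := by
  rw [dist_eq_norm,
    ← integral_sub (integrable_of_ae_mem_Icc hμ hf) (integrable_of_ae_mem_Icc hμ hg)]
  refine norm_integral_le_of_norm_le_const ?_
  filter_upwards [hμ] with x hx
  rw [← dist_eq_norm]
  exact hfg x hx

theorem ext_of_integral_pow_eq [IsFiniteMeasure μ] [IsFiniteMeasure ν]
    (hμ : ∀ᵐ x ∂μ, x ∈ Icc a b) (hν : ∀ᵐ x ∂ν, x ∈ Icc a b)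
    (h : ∀ n : ℕ, ∫ x, x ^ n ∂μ = ∫ x, x ^ n ∂ν) : μ = ν := by
  have hpoly (p : Polynomial ℝ) : ∫ x, p.eval x ∂μ = ∫ x, p.eval x ∂ν := by
    simp only [integral_eval_eq_sum_moments hμ, integral_eval_eq_sum_moments hν, h]
  refine ext_of_forall_integral_eq_of_IsFiniteMeasure fun f =>
    eq_of_forall_dist_le fun ε hε => ?_
  set C := μ.real univ + ν.real univ + 1
  have hC : 0 < C := by positivity
  obtain ⟨p, hp⟩ := exists_polynomial_near_of_continuousOn a b f f.continuous.continuousOn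
    (ε / C) (by positivity)
  have hfp : ∀ x ∈ Icc a b, dist (f x) (p.eval x) ≤ ε / C := fun x hx => by
    rw [dist_comm, Real.dist_eq]; exact (hp x hx).le
  have hpf : ∀ x ∈ Icc a b, dist (p.eval x) (f x) ≤ ε / C := fun x hx => by
    rw [dist_comm]; exact hfp x hx
  calc dist (∫ x, f x ∂μ) (∫ x, f x ∂ν)
      ≤ dist (∫ x, f x ∂μ) (∫ x, p.eval x ∂μ) + dist (∫ x, p.eval x ∂ν) (∫ x, f x ∂ν) := by
        rw [← hpoly]; exact dist_triangle _ _ _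
    _ ≤ ε / C * μ.real univ + ε / C * ν.real univ :=
        add_le_add
          (dist_integral_le_of_forall_mem_Icc hμ f.continuous.continuousOn
            p.continuous.continuousOn hfp)
          (dist_integral_le_of_forall_mem_Icc hν p.continuous.continuousOn
            f.continuous.continuousOn hpf)
    _ ≤ ε := by
        rw [← mul_add, div_mul_eq_mul_div, div_le_iff₀ hC]
        exact mul_le_mul_of_nonneg_left (by linarith) hε.le

end MeasureTheory.Measure

/-- The image of `x S(x) dx` on `(0, ∞)` under `S`: for `S = F̄ ^ c` its `n`-th moment is
`∫ x F̄(x) ^ ((n + 1) c) dx`. -/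
noncomputable def survivalMeasure (S : ℝ → ℝ) : Measure ℝ :=
  ((volume.restrict (Ioi 0)).withDensity fun x => ENNReal.ofReal (x * S x)).map S

section survivalMeasure

variable {S : ℝ → ℝ}

theorem integral_survivalMeasure (hS : Measurable S) (hS0 : ∀ x ∈ Ioi (0 : ℝ), 0 ≤ S x)
    {φ : ℝ → ℝ} (hφ : Measurable φ) :
    ∫ t, φ t ∂survivalMeasure S = ∫ x in Ioi 0, x * S x * φ (S x) := by
  rw [survivalMeasure, integral_map hS.aemeasurable hφ.aestronglyMeasurable,
    integral_withDensity_eq_integral_toReal_smul (by fun_prop)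
      (ae_of_all _ fun _ => ENNReal.ofReal_lt_top)]
  refine setIntegral_congr_fun measurableSet_Ioi fun x hx => ?_
  rw [ENNReal.toReal_ofReal (mul_nonneg (le_of_lt hx) (hS0 x hx)), smul_eq_mul]

theorem isFiniteMeasure_survivalMeasure (h : IntegrableOn (fun x => x * S x) (Ioi 0)) :
    IsFiniteMeasure (survivalMeasure S) :=
  have := isFiniteMeasure_withDensity_ofReal h.hasFiniteIntegral
  Measure.isFiniteMeasure_map _ _

theorem ae_mem_survivalMeasure (hS : Measurable S) {s : Set ℝ} (hs : MeasurableSet s)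
    (h : ∀ x ∈ Ioi 0, S x ∈ s) : ∀ᵐ t ∂survivalMeasure S, t ∈ s := by
  refine (ae_map_iff hS.aemeasurable hs).2 ?_
  exact (withDensity_absolutelyContinuous _ _).ae_le
    (ae_restrict_of_forall_mem measurableSet_Ioi h)

theorem integral_indicator_inv_survivalMeasure (hS : Measurable S)
    (hanti : StrictAntiOn S (Ici 0)) (hS0 : ∀ x ∈ Ioi (0 : ℝ), 0 ≤ S x) {a : ℝ} (ha : 0 < a)
    (hSa : 0 < S a) :
    ∫ t, (Ioi (S a)).indicator (fun t => t⁻¹) t ∂survivalMeasure S = a ^ 2 / 2 := by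
  have hlevel : ∀ x ∈ Ioi (0 : ℝ),
      x * S x * (Ioi (S a)).indicator (fun t => t⁻¹) (S x) = (Iio a).indicator (fun y => y) x := by
    intro x hx
    have hlt : S x ∈ Ioi (S a) ↔ x ∈ Iio a :=
      hanti.lt_iff_gt (mem_Ici.2 ha.le) (mem_Ici.2 (le_of_lt hx))
    by_cases hxa : x ∈ Iio a
    · have hSx := hlt.2 hxa
      rw [indicator_of_mem hSx, indicator_of_mem hxa, mul_assoc,
        mul_inv_cancel₀ (hSa.trans hSx).ne', mul_one]
    · rw [indicator_of_notMem (hlt.not.2 hxa), indicator_of_notMem hxa, mul_zero]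
  rw [integral_survivalMeasure hS hS0 (measurable_inv.indicator measurableSet_Ioi),
    setIntegral_congr_fun measurableSet_Ioi hlevel, integral_indicator measurableSet_Iio,
    Measure.restrict_restrict measurableSet_Iio, Iio_inter_Ioi, ← integral_Ioc_eq_integral_Ioo,
    ← intervalIntegral.integral_of_le ha.le, integral_id]
  ring

end survivalMeasure

structure IsSurvivalFunction (S : ℝ → ℝ) : Prop where
  continuous : Continuous S
  strictAntiOn : StrictAntiOn S (Ici 0)
  map_zero : S 0 = 1
  tendsto_atTop : Tendsto S atTop (nhds 0)

namespace IsSurvivalFunction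

variable {S T : ℝ → ℝ}

theorem pos (hS : IsSurvivalFunction S) (x : ℝ) (hx : 0 ≤ x) : 0 < S x := by
  have hx1 : x + 1 ∈ Ici (0 : ℝ) := mem_Ici.2 (by linarith)
  have hlim : 0 ≤ S (x + 1) := by
    refine le_of_tendsto hS.tendsto_atTop ?_
    filter_upwards [eventually_ge_atTop (x + 1)] with y hy
    exact hS.strictAntiOn.antitoneOn hx1 (mem_Ici.2 (hx1.out.trans hy)) hy
  exact hlim.trans_lt (hS.strictAntiOn hx hx1 (by linarith))

theorem le_one (hS : IsSurvivalFunction S) (x : ℝ) (hx : 0 ≤ x) : S x ≤ 1 :=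
  hS.map_zero ▸ hS.strictAntiOn.antitoneOn self_mem_Ici hx hx

theorem rpow (hS : IsSurvivalFunction S) {c : ℝ} (hc : 0 < c) :
    IsSurvivalFunction fun x => S x ^ c where
  continuous := hS.continuous.rpow_const fun _ => Or.inr hc.le
  strictAntiOn x hx y hy hxy :=
    Real.rpow_lt_rpow (hS.pos y hy).le (hS.strictAntiOn hx hy hxy) hc
  map_zero := by simp [hS.map_zero]
  tendsto_atTop := by
    simpa [Function.comp_def, Real.zero_rpow hc.ne'] using
      (Real.continuousAt_rpow_const 0 c (Or.inr hc.le)).tendsto.comp hS.tendsto_atTop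

theorem exists_pos_eq (hS : IsSurvivalFunction S) {s : ℝ} (hs : s ∈ Ioo 0 1) :
    ∃ b, 0 < b ∧ S b = s := by
  obtain ⟨X, hSX, hX⟩ :=
    ((hS.tendsto_atTop.eventually (gt_mem_nhds hs.1)).and (eventually_ge_atTop 0)).exists
  obtain ⟨b, hb, hSb⟩ := intermediate_value_Icc' hX hS.continuous.continuousOn
    ⟨hSX.le, hS.map_zero ▸ hs.2.le⟩
  refine ⟨b, hb.1.lt_of_ne ?_, hSb⟩
  rintro rfl
  exact hs.2.ne (hS.map_zero ▸ hSb).symm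

theorem setIntegral_mul_rpow_pos (hS : IsSurvivalFunction S) (r : ℝ)
    (h : IntegrableOn (fun x => x * S x ^ r) (Ioi 0)) : 0 < ∫ x in Ioi 0, x * S x ^ r := by
  have hpos : ∀ x ∈ Ioi (0 : ℝ), 0 < x * S x ^ r := fun x hx =>
    mul_pos hx (Real.rpow_pos_of_pos (hS.pos x (le_of_lt hx)) r)
  rw [setIntegral_pos_iff_support_of_nonneg_ae
    (ae_restrict_of_forall_mem measurableSet_Ioi fun x hx => (hpos x hx).le) h]
  refine lt_of_lt_of_le ?_ (measure_mono fun x hx => ⟨(hpos x hx).ne', hx⟩)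
  simp

theorem ae_mem_Icc_survivalMeasure (hS : IsSurvivalFunction S) :
    ∀ᵐ t ∂survivalMeasure S, t ∈ Icc 0 1 :=
  ae_mem_survivalMeasure hS.continuous.measurable measurableSet_Icc fun x hx =>
    ⟨(hS.pos x (le_of_lt hx)).le, hS.le_one x (le_of_lt hx)⟩

theorem eqOn_of_survivalMeasure_eq (hS : IsSurvivalFunction S) (hT : IsSurvivalFunction T)
    (h : survivalMeasure S = survivalMeasure T) : EqOn S T (Ici 0) := by
  intro x hx
  rcases (mem_Ici.1 hx).eq_or_lt with rfl | hx0
  · rw [hS.map_zero, hT.map_zero]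
  have hSx : S x ∈ Ioo 0 1 :=
    ⟨hS.pos x hx0.le, hS.map_zero ▸ hS.strictAntiOn self_mem_Ici hx hx0⟩
  obtain ⟨b, hb, hTb⟩ := hT.exists_pos_eq hSx
  have hsq : x ^ 2 / 2 = b ^ 2 / 2 := by
    rw [← integral_indicator_inv_survivalMeasure hS.continuous.measurable hS.strictAntiOn
        (fun y hy => (hS.pos y (le_of_lt hy)).le) hx0 hSx.1, h, ← hTb,
      integral_indicator_inv_survivalMeasure hT.continuous.measurable hT.strictAntiOn
        (fun y hy => (hT.pos y (le_of_lt hy)).le) hb (hTb ▸ hSx.1)]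
  obtain rfl : x = b := (pow_left_inj₀ hx0.le hb.le two_ne_zero).1 (by linarith)
  exact hTb.symm

end IsSurvivalFunction

theorem isSurvivalFunction_one_sub {F f : ℝ → ℝ} (hF : ∀ x, HasDerivAt F (f x) x)
    (hf : ∀ x, 0 ≤ x → 0 < f x) (hF0 : F 0 = 0) (hFtop : Tendsto F atTop (nhds 1)) :
    IsSurvivalFunction fun x => 1 - F x := by
  have hcont : Continuous F := continuous_iff_continuousAt.2 fun x => (hF x).continuousAt
  have hmono : StrictMonoOn F (Ici 0) := by
    refine strictMonoOn_of_deriv_pos (convex_Ici 0) hcont.continuousOn fun x hx => ?_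
    rw [interior_Ici] at hx
    rw [(hF x).deriv]
    exact hf x (le_of_lt hx)
  exact
    { continuous := continuous_const.sub hcont
      strictAntiOn := fun x hx y hy hxy => sub_lt_sub_left (hmono hx hy hxy) 1
      map_zero := by simp [hF0]
      tendsto_atTop := by simpa using hFtop.const_sub 1 }

theorem integral_pow_survivalMeasure_rpow {S : ℝ → ℝ} (hS : Measurable S)
    (hS0 : ∀ x ∈ Ioi (0 : ℝ), 0 ≤ S x) (c : ℝ) (n : ℕ) :
    ∫ t, t ^ n ∂survivalMeasure (fun x => S x ^ c)
      = ∫ x in Ioi 0, x * S x ^ (((n + 1 : ℕ) : ℝ) * c) := by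
  rw [integral_survivalMeasure (hS.pow_const c) (fun x hx => Real.rpow_nonneg (hS0 x hx) c)
    (by fun_prop)]
  refine setIntegral_congr_fun measurableSet_Ioi fun x hx => ?_
  rw [mul_assoc, ← pow_succ', ← Real.rpow_natCast, ← Real.rpow_mul (hS0 x hx), mul_comm c]

theorem gwse_minima_characterization_general (α β : ℝ)
    (hβ : 1 ≤ β) (hα1 : β - 1 < α) (hα2 : α < β)
    (F G f g : ℝ → ℝ)
    (hfpos : ∀ x, 0 ≤ x → 0 < f x) (hgpos : ∀ x, 0 ≤ x → 0 < g x)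
    (hF : ∀ x, HasDerivAt F (f x) x) (hG : ∀ x, HasDerivAt G (g x) x)
    (hF0 : F 0 = 0) (hG0 : G 0 = 0)
    (hFtop : Tendsto F atTop (nhds 1)) (hGtop : Tendsto G atTop (nhds 1))
    (hint : ∀ n : ℕ, 1 ≤ n →
      IntegrableOn (fun x => x * (1 - F x) ^ ((n : ℝ) * (α + β - 1))) (Set.Ioi 0) ∧
      IntegrableOn (fun x => x * (1 - G x) ^ ((n : ℝ) * (α + β - 1))) (Set.Ioi 0))
    (heq : ∀ n : ℕ, 1 ≤ n →
      (1 / (β - α)) *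
          Real.log (∫ x in Set.Ioi (0:ℝ), x * (1 - F x) ^ ((n : ℝ) * (α + β - 1))) =
        (1 / (β - α)) *
          Real.log (∫ x in Set.Ioi (0:ℝ), x * (1 - G x) ^ ((n : ℝ) * (α + β - 1)))) :
    ∀ x, 0 ≤ x → F x = G x := by
  have hc : 0 < α + β - 1 := by linarith
  set c := α + β - 1
  have hF1 := isSurvivalFunction_one_sub hF hfpos hF0 hFtop
  have hG1 := isSurvivalFunction_one_sub hG hgpos hG0 hGtop
  have hmom (n : ℕ) (hn : 1 ≤ n) :
      ∫ x in Ioi 0, x * (1 - F x) ^ ((n : ℝ) * c)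
        = ∫ x in Ioi 0, x * (1 - G x) ^ ((n : ℝ) * c) :=
    Real.log_injOn_pos (hF1.setIntegral_mul_rpow_pos _ (hint n hn).1)
      (hG1.setIntegral_mul_rpow_pos _ (hint n hn).2)
      (mul_left_cancel₀ (one_div_ne_zero (sub_ne_zero.2 hα2.ne')) (heq n hn))
  have := isFiniteMeasure_survivalMeasure (by simpa using (hint 1 le_rfl).1)
  have := isFiniteMeasure_survivalMeasure (by simpa using (hint 1 le_rfl).2)
  have hν :
      survivalMeasure (fun x => (1 - F x) ^ c) = survivalMeasure (fun x => (1 - G x) ^ c) :=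
    Measure.ext_of_integral_pow_eq (hF1.rpow hc).ae_mem_Icc_survivalMeasure
      (hG1.rpow hc).ae_mem_Icc_survivalMeasure fun n => by
        rw [integral_pow_survivalMeasure_rpow hF1.continuous.measurable
            (fun x hx => (hF1.pos x hx.out.le).le),
          integral_pow_survivalMeasure_rpow hG1.continuous.measurable
            (fun x hx => (hG1.pos x hx.out.le).le),
          hmom (n + 1) n.succ_pos]
  intro x hx
  have hSx := (hF1.rpow hc).eqOn_of_survivalMeasure_eq (hG1.rpow hc) hν (mem_Ici.2 hx)
  have := (Real.rpow_left_inj (hF1.pos x hx).le (hG1.pos x hx).le hc.ne').1 hSx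
  linarith

/-- if the generalized weighted survival entropies of the sample
minima agree for every sample size `n ≥ 1`, then the two distributions coincide. -/
theorem gwse_minima_characterization (α β : ℝ)
    (hβ : 1 ≤ β) (hα1 : β - 1 < α) (hα2 : α < β)
    (F G f g : ℝ → ℝ)
    (hf : Continuous f) (hg : Continuous g)
    (hfpos : ∀ x, 0 ≤ x → 0 < f x) (hgpos : ∀ x, 0 ≤ x → 0 < g x)
    (hF : ∀ x, HasDerivAt F (f x) x) (hG : ∀ x, HasDerivAt G (g x) x)
    (hF0 : F 0 = 0) (hG0 : G 0 = 0)
    (hFtop : Tendsto F atTop (nhds 1)) (hGtop : Tendsto G atTop (nhds 1))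
    (hint : ∀ n : ℕ, 1 ≤ n →
      IntegrableOn (fun x => x * (1 - F x) ^ ((n : ℝ) * (α + β - 1))) (Set.Ioi 0) ∧
      IntegrableOn (fun x => x * (1 - G x) ^ ((n : ℝ) * (α + β - 1))) (Set.Ioi 0))
    (heq : ∀ n : ℕ, 1 ≤ n →
      (1 / (β - α)) *
          Real.log (∫ x in Set.Ioi (0:ℝ), x * (1 - F x) ^ ((n : ℝ) * (α + β - 1))) =
        (1 / (β - α)) *
          Real.log (∫ x in Set.Ioi (0:ℝ), x * (1 - G x) ^ ((n : ℝ) * (α + β - 1)))) :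
    ∀ x, 0 ≤ x → F x = G x :=
  gwse_minima_characterization_general α β hβ hα1 hα2 F G f g hfpos hgpos hF hG hF0 hG0 hFtop hGtop
    hint heq
end

section
/- Let X be a non-negative absolutely continuous random variable with cdf F, density f, and reversed hazard rate r_F(t) = f(t)/F(t). Then for t > 0 with F(t) > 0, (β−α)·(d/dt)fξ^w_{α,β}(X;t) = t·exp[−(β−α)·fξ^w_{α,β}(X;t)] − (α+β−1)·r_F(t). Consequently, fξ^w_{α,β}(X;t) is increasing (decreasing) in t if and only if r_F(t) ≤ (≥) (t/(α+β−1))·exp[−(β−α)·fξ^w_{α,β}(X;t)]. -/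
open MeasureTheory Set

/-- The generalized dynamic weighted failure entropy of a random variable with
cdf `F`, at time `t`. -/
noncomputable def gdwfe (α β : ℝ) (F : ℝ → ℝ) (t : ℝ) : ℝ :=
  (1 / (β - α)) * Real.log (∫ x in Set.Ioc (0:ℝ) t, x * (F x / F t) ^ (α + β - 1))

/-! Pulling `F(t)^(α+β-1)` out of the integral gives
`(β-α) fξ(t) = log G(t) - (α+β-1) log F(t)` with `G(t) = ∫₀ᵗ x F(x)^(α+β-1) dx`, so the
derivative follows from `G' = t F^(α+β-1)` and `F' = f`, together with
`exp(-(β-α) fξ) = F^(α+β-1) / G`. As `β - α > 0` and `α + β - 1 > 0`, the sign of the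
derivative is that of `t exp(-(β-α) fξ) - (α+β-1) r_F`, and on the open interval `(0, ∞)`
monotonicity amounts to the sign of the derivative. -/

section Monotonicity

variable {s : Set ℝ} {g g' : ℝ → ℝ}

theorem monotoneOn_iff_hasDerivAt_nonneg (hs : IsOpen s) (hs' : Convex ℝ s)
    (hg : ∀ x ∈ s, HasDerivAt g (g' x) x) : MonotoneOn g s ↔ ∀ x ∈ s, 0 ≤ g' x := by
  refine ⟨fun hmono x hx ↦ ?_, fun hnonneg ↦ ?_⟩
  · exact (hg x hx).hasDerivWithinAt.nonneg_of_monotoneOn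
      (hs.uniqueDiffWithinAt (𝕜 := ℝ) hx).accPt hmono
  · refine monotoneOn_of_hasDerivWithinAt_nonneg (f' := g') hs'
      (fun x hx ↦ (hg x hx).continuousAt.continuousWithinAt) ?_ ?_ <;> rw [hs.interior_eq]
    · exact fun x hx ↦ (hg x hx).hasDerivWithinAt
    · exact hnonneg

theorem antitoneOn_iff_hasDerivAt_nonpos (hs : IsOpen s) (hs' : Convex ℝ s)
    (hg : ∀ x ∈ s, HasDerivAt g (g' x) x) : AntitoneOn g s ↔ ∀ x ∈ s, g' x ≤ 0 := by
  refine ⟨fun hanti x hx ↦ ?_, fun hnonpos ↦ ?_⟩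
  · exact (hg x hx).hasDerivWithinAt.nonpos_of_antitoneOn
      (hs.uniqueDiffWithinAt (𝕜 := ℝ) hx).accPt hanti
  · refine antitoneOn_of_hasDerivWithinAt_nonpos (f' := g') hs'
      (fun x hx ↦ (hg x hx).continuousAt.continuousWithinAt) ?_ ?_ <;> rw [hs.interior_eq]
    · exact fun x hx ↦ (hg x hx).hasDerivWithinAt
    · exact hnonpos

end Monotonicity

section Entropy

variable {α β : ℝ} {F : ℝ → ℝ}

theorem setIntegral_mul_div_rpow {p s : ℝ} (hF : ∀ x ∈ Ioc 0 s, 0 ≤ F x) (hFs : 0 ≤ F s) :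
    ∫ x in Ioc 0 s, x * (F x / F s) ^ p = (∫ x in Ioc 0 s, x * F x ^ p) / F s ^ p := by
  rw [← integral_div]
  refine setIntegral_congr_fun measurableSet_Ioc fun x hx ↦ ?_
  rw [Real.div_rpow (hF x hx) hFs, mul_div_assoc]

theorem gdwfe_eq_log_sub {s : ℝ} (hF : ∀ x ∈ Ioc 0 s, 0 ≤ F x) (hFs : 0 < F s)
    (hG : ∫ x in Ioc 0 s, x * F x ^ (α + β - 1) ≠ 0) :
    gdwfe α β F s = 1 / (β - α) *
      (Real.log (∫ x in Ioc 0 s, x * F x ^ (α + β - 1)) - (α + β - 1) * Real.log (F s)) := by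
  rw [gdwfe, setIntegral_mul_div_rpow hF hFs.le,
    Real.log_div hG (Real.rpow_pos_of_pos hFs _).ne', Real.log_rpow hFs]

theorem exp_neg_mul_gdwfe {s : ℝ} (hαβ : α ≠ β) (hF : ∀ x ∈ Ioc 0 s, 0 ≤ F x)
    (hFs : 0 < F s)
    (hG : 0 < ∫ x in Ioc 0 s, x * F x ^ (α + β - 1)) :
    Real.exp (-(β - α) * gdwfe α β F s) =
      F s ^ (α + β - 1) / ∫ x in Ioc 0 s, x * F x ^ (α + β - 1) := by
  have hβα : β - α ≠ 0 := sub_ne_zero.2 hαβ.symm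
  rw [gdwfe, ← mul_assoc, neg_mul, mul_one_div_cancel hβα, neg_one_mul, Real.exp_neg,
    setIntegral_mul_div_rpow hF hFs.le, Real.exp_log (div_pos hG (Real.rpow_pos_of_pos hFs _)),
    inv_div]

theorem hasDerivAt_gdwfe {f' t : ℝ} (hαβ : α ≠ β) (hF : ∀ x, 0 < x → 0 < F x)
    (hf : HasDerivAt F f' t)
    (hG : HasDerivAt (fun s ↦ ∫ x in Ioc 0 s, x * F x ^ (α + β - 1))
      (t * F t ^ (α + β - 1)) t)
    (hGt : 0 < ∫ x in Ioc 0 t, x * F x ^ (α + β - 1)) (ht : 0 < t) :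
    HasDerivAt (gdwfe α β F)
      (1 / (β - α) * (t * Real.exp (-(β - α) * gdwfe α β F t) - (α + β - 1) * (f' / F t)))
      t := by
  have hFIoc : ∀ s, ∀ x ∈ Ioc 0 s, 0 ≤ F x := fun s x hx ↦ (hF x hx.1).le
  have hlog : gdwfe α β F =ᶠ[nhds t] fun s ↦ 1 / (β - α) *
      (Real.log (∫ x in Ioc 0 s, x * F x ^ (α + β - 1)) - (α + β - 1) * Real.log (F s)) := by
    filter_upwards [Ioi_mem_nhds ht, hG.continuousAt.eventually (lt_mem_nhds hGt)]
      with s hs hGs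
    exact gdwfe_eq_log_sub (hFIoc s) (hF s hs) hGs.ne'
  refine ((hG.log hGt.ne').sub ((hf.log (hF t ht).ne').const_mul _)
    |>.const_mul (1 / (β - α))).congr_of_eventuallyEq hlog |>.congr_deriv ?_
  rw [exp_neg_mul_gdwfe hαβ (hFIoc t) (hF t ht) hGt, mul_div_assoc]

end Entropy

/-- the derivative of the GDWFE satisfies
`(β−α)·(fξ^w)'(t) = t·exp[−(β−α)·fξ^w(t)] − (α+β−1)·r_F(t)`; consequently the
GDWFE is increasing (decreasing) on `(0,∞)` iff
`r_F(t) ≤ (≥) (t/(α+β−1))·exp[−(β−α)·fξ^w(t)]`. -/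
theorem gdwfe_deriv_and_monotonicity (α β : ℝ)
    (hβ : 1 ≤ β) (hα1 : β - 1 < α) (hα2 : α < β)
    (F f : ℝ → ℝ)
    (hFpos : ∀ t, 0 < t → 0 < F t)
    (hFderiv : ∀ t, 0 < t → HasDerivAt F (f t) t)
    (hFTC : ∀ t, 0 < t →
      HasDerivAt (fun s => ∫ x in Set.Ioc (0:ℝ) s, x * F x ^ (α + β - 1))
        (t * F t ^ (α + β - 1)) t)
    (hpos : ∀ t, 0 < t → 0 < ∫ x in Set.Ioc (0:ℝ) t, x * F x ^ (α + β - 1)) :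
    (∀ t, 0 < t →
      HasDerivAt (gdwfe α β F)
        ((1 / (β - α)) * (t * Real.exp (-(β - α) * gdwfe α β F t) -
          (α + β - 1) * (f t / F t))) t) ∧
    (MonotoneOn (gdwfe α β F) (Set.Ioi 0) ↔
      ∀ t, 0 < t →
        f t / F t ≤ t / (α + β - 1) * Real.exp (-(β - α) * gdwfe α β F t)) ∧
    (AntitoneOn (gdwfe α β F) (Set.Ioi 0) ↔
      ∀ t, 0 < t →
        f t / F t ≥ t / (α + β - 1) * Real.exp (-(β - α) * gdwfe α β F t)) := by
  have hp : 0 < α + β - 1 := by linarith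
  have hc : 0 < 1 / (β - α) := one_div_pos.2 (sub_pos.2 hα2)
  have hderiv := fun t (ht : 0 < t) ↦
    hasDerivAt_gdwfe hα2.ne hFpos (hFderiv t ht) (hFTC t ht) (hpos t ht) ht
  refine ⟨hderiv, ?_, ?_⟩
  · rw [monotoneOn_iff_hasDerivAt_nonneg isOpen_Ioi (convex_Ioi 0) hderiv]
    refine forall₂_congr fun t _ ↦ ?_
    rw [mul_nonneg_iff_of_pos_left hc, sub_nonneg, div_mul_eq_mul_div, le_div_iff₀ hp, mul_comm]
  · rw [antitoneOn_iff_hasDerivAt_nonpos isOpen_Ioi (convex_Ioi 0) hderiv]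
    refine forall₂_congr fun t _ ↦ ?_
    rw [← neg_nonneg, ← mul_neg, mul_nonneg_iff_of_pos_left hc, neg_nonneg, sub_nonpos,
      ge_iff_le, div_mul_eq_mul_div, div_le_iff₀ hp, mul_comm (f t / F t)]
end

section
/- Let X be a non-negative absolutely continuous random variable with density f, finite Shannon entropy H(X) = −∫₀^∞ f(x)·log f(x) dx, and finite E[log X]. Then (β−α)·ξ^w_{α,β}(X) + (α+β−1) ≥ H(X) + E[log X]. -/
/-!
Let `ν` be the law with density `f` on `(0, ∞)` and `S x = ν (x, ∞)` its survival function.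
Since `ν` has no atoms, `S` is continuous and pushes `ν` forward to the uniform law on `[0, 1]`,
so `∫ f log S = ∫₀¹ log u du = -1`, and `S > 0` almost everywhere on `{f > 0}`. The log-sum
inequality for `f` and `h x = x S(x) ^ (α + β - 1)` gives `∫ f log h - ∫ f log f ≤ log ∫ h`,
and `∫ f log h = E[log X] - (α + β - 1)`.
-/

open MeasureTheory ProbabilityTheory Set Filter Topology

lemma Real.mul_log_sub_mul_log_le {a b k : ℝ} (ha : 0 ≤ a) (hb : 0 ≤ b) (hab : 0 < a → 0 < b)
    (hk : 0 < k) : a * Real.log b - a * Real.log a ≤ k * b - a - a * Real.log k := by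
  rcases ha.eq_or_lt with rfl | ha
  · simpa using mul_nonneg hk.le hb
  have hb := hab ha
  have h := Real.log_le_sub_one_of_pos (show 0 < k * b / a by positivity)
  rw [Real.log_div (by positivity) ha.ne', Real.log_mul hk.ne' hb.ne',
    le_sub_iff_add_le, le_div_iff₀ ha] at h
  linarith

lemma Real.mul_log_mul_rpow {a x t : ℝ} (c : ℝ) (hx : 0 < x) (ht : a ≠ 0 → 0 < t) :
    a * Real.log (x * t ^ c) = a * Real.log x + c * (a * Real.log t) := by
  rcases eq_or_ne a 0 with rfl | ha
  · simp
  rw [Real.log_mul hx.ne' (Real.rpow_pos_of_pos (ht ha) c).ne', Real.log_rpow (ht ha)]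
  ring

namespace ProbabilityTheory

def survival (μ : Measure ℝ) (x : ℝ) : ℝ := μ.real (Ioi x)

variable {μ : Measure ℝ}

lemma survival_nonneg (x : ℝ) : 0 ≤ survival μ x := measureReal_nonneg

variable [IsProbabilityMeasure μ]

lemma survival_eq_one_sub_cdf : survival μ = fun x => 1 - cdf μ x := by
  ext x
  rw [survival, cdf_eq_real, ← compl_Iic, probReal_compl_eq_one_sub measurableSet_Iic]

lemma survival_le_one (x : ℝ) : survival μ x ≤ 1 := by
  rw [survival_eq_one_sub_cdf]; linarith [cdf_nonneg μ x]

lemma antitone_survival : Antitone (survival μ) := fun _ _ hxy => by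
  simp only [survival_eq_one_sub_cdf]; linarith [(cdf μ).mono hxy]

lemma tendsto_survival_atTop : Tendsto (survival μ) atTop (𝓝 0) := by
  rw [survival_eq_one_sub_cdf]; simpa using (tendsto_cdf_atTop μ).const_sub 1

lemma tendsto_survival_atBot : Tendsto (survival μ) atBot (𝓝 1) := by
  rw [survival_eq_one_sub_cdf]; simpa using (tendsto_cdf_atBot μ).const_sub 1

variable [NullSingletonClass μ]

lemma continuous_cdf : Continuous (cdf μ) := by
  refine continuous_iff_continuousAt.2 fun x => ?_
  have h := (cdf μ).measure_singleton x
  rw [measure_cdf, measure_singleton, eq_comm, ENNReal.ofReal_eq_zero, sub_nonpos] at h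
  rw [(cdf μ).mono.continuousAt_iff_leftLim_eq_rightLim, (cdf μ).rightLim_eq]
  exact le_antisymm ((cdf μ).mono.leftLim_le le_rfl) h

lemma continuous_survival : Continuous (survival μ) := by
  rw [survival_eq_one_sub_cdf]; exact continuous_const.sub continuous_cdf

lemma measure_survival_lt {u : ℝ} (hu : u ∈ Ioo 0 1) :
    μ {x | survival μ x < u} = ENNReal.ofReal u := by
  obtain ⟨a, ha⟩ := ((tendsto_survival_atBot (μ := μ)).eventually (lt_mem_nhds hu.2)).exists
  obtain ⟨N, hN⟩ :=
    eventually_atTop.1 ((tendsto_survival_atTop (μ := μ)).eventually (gt_mem_nhds hu.1))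
  have hT : (survival μ ⁻¹' {u}).Nonempty :=
    intermediate_value_univ N a continuous_survival ⟨(hN N le_rfl).le, ha.le⟩
  have hbdd : BddAbove (survival μ ⁻¹' {u}) :=
    ⟨N, fun x hx => not_lt.1 fun hNx => (hN x hNx.le).ne hx⟩
  set b := sSup (survival μ ⁻¹' {u})
  have hb : survival μ b = u :=
    (isClosed_singleton.preimage continuous_survival).csSup_mem hT hbdd
  have hlt : {x | survival μ x < u} = Ioi b := by
    ext x
    refine ⟨fun hx => mem_Ioi.2 (not_le.1 fun hxb => ?_), fun hbx => ?_⟩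
    · exact hx.not_ge (hb ▸ antitone_survival hxb)
    · have hxb : survival μ x ≤ u := hb ▸ antitone_survival (le_of_lt hbx)
      exact hxb.lt_of_ne fun hxu => (not_le.2 hbx) (le_csSup hbdd hxu)
  rw [hlt, ← ofReal_measureReal, ← survival, hb]

lemma measure_survival_le {u : ℝ} (hu : u ∈ Ico 0 1) :
    μ {x | survival μ x ≤ u} = ENNReal.ofReal u := by
  refine le_antisymm ?_ ?_
  · refine ge_of_tendsto
      (ENNReal.continuous_ofReal.continuousWithinAt (s := Ioi u) (x := u)).tendsto ?_
    filter_upwards [Ioo_mem_nhdsGT hu.2] with v hv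
    rw [← measure_survival_lt (μ := μ) ⟨hu.1.trans_lt hv.1, hv.2⟩]
    exact measure_mono fun x hx => lt_of_le_of_lt hx hv.1
  · rcases hu.1.eq_or_lt with rfl | hu0
    · simp
    · rw [← measure_survival_lt (μ := μ) ⟨hu0, hu.2⟩]
      exact measure_mono fun x (hx : survival μ x < u) => hx.le

theorem map_survival : μ.map (survival μ) = volume.restrict (Icc 0 1) := by
  refine Measure.ext_of_Iic _ _ fun u => ?_
  rw [Measure.map_apply continuous_survival.measurable measurableSet_Iic,
    Measure.restrict_apply measurableSet_Iic]
  have hI : Iic u ∩ Icc 0 1 = Icc 0 (min u 1) := by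
    ext; simp only [mem_inter_iff, mem_Iic, mem_Icc, le_min_iff]; tauto
  rcases lt_or_ge u 0 with hu0 | hu0
  · have : survival μ ⁻¹' Iic u = ∅ :=
      eq_empty_of_forall_notMem fun x hx => (hu0.trans_le (survival_nonneg x)).not_ge hx
    rw [this, hI, Icc_eq_empty (by simp [hu0]), measure_empty, measure_empty]
  rcases lt_or_ge u 1 with hu1 | hu1
  · rw [hI, min_eq_left hu1.le, Real.volume_Icc, sub_zero]
    exact measure_survival_le ⟨hu0, hu1⟩
  · have : survival μ ⁻¹' Iic u = univ :=
      eq_univ_of_forall fun x => (survival_le_one x).trans hu1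
    rw [this, hI, min_eq_right hu1, Real.volume_Icc, measure_univ]
    simp

lemma integrable_log_survival : Integrable (fun x => Real.log (survival μ x)) μ := by
  have h : Integrable Real.log (μ.map (survival μ)) := by
    rw [map_survival]
    exact (intervalIntegrable_iff_integrableOn_Icc_of_le zero_le_one).1
      intervalIntegral.intervalIntegrable_log'
  exact h.comp_measurable continuous_survival.measurable

lemma integral_log_survival : ∫ x, Real.log (survival μ x) ∂μ = -1 := by
  rw [← integral_map continuous_survival.aemeasurable
    Real.measurable_log.aestronglyMeasurable, map_survival, integral_Icc_eq_integral_Ioc,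
    ← intervalIntegral.integral_of_le zero_le_one, integral_log]
  simp

lemma ae_survival_pos : ∀ᵐ x ∂μ, 0 < survival μ x := by
  refine ae_of_ae_map continuous_survival.aemeasurable ?_
  rw [map_survival, ← Measure.restrict_congr_set Ioc_ae_eq_Icc]
  exact ae_restrict_of_forall_mem measurableSet_Ioc fun y hy => hy.1

end ProbabilityTheory

theorem MeasureTheory.integral_mul_log_sub_integral_mul_log_le {α : Type*} [MeasurableSpace α]
    {μ : Measure α} {f h : α → ℝ} (hf : 0 ≤ᵐ[μ] f) (hh : 0 ≤ᵐ[μ] h)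
    (hfh : ∀ᵐ x ∂μ, 0 < f x → 0 < h x)
    (hf_int : Integrable f μ) (hh_int : Integrable h μ)
    (hflogf : Integrable (fun x => f x * Real.log (f x)) μ)
    (hflogh : Integrable (fun x => f x * Real.log (h x)) μ)
    (hA : 0 < ∫ x, f x ∂μ) (hB : 0 < ∫ x, h x ∂μ) :
    ∫ x, f x * Real.log (h x) ∂μ - ∫ x, f x * Real.log (f x) ∂μ ≤
      (∫ x, f x ∂μ) * Real.log ((∫ x, h x ∂μ) / ∫ x, f x ∂μ) := by
  set A := ∫ x, f x ∂μ
  set B := ∫ x, h x ∂μ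
  have hlin : Integrable (fun x => A / B * h x - f x) μ := (hh_int.const_mul _).sub hf_int
  have key : ∫ x, (f x * Real.log (h x) - f x * Real.log (f x)) ∂μ ≤
      ∫ x, (A / B * h x - f x - f x * Real.log (A / B)) ∂μ := by
    refine integral_mono_ae (hflogh.sub hflogf) (hlin.sub (hf_int.mul_const _)) ?_
    filter_upwards [hf, hh, hfh] with x hfx hhx hfhx
    simpa [mul_comm (f x)] using Real.mul_log_sub_mul_log_le hfx hhx hfhx (div_pos hA hB)
  rw [integral_sub hflogh hflogf, integral_sub hlin (hf_int.mul_const _),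
    integral_sub (hh_int.const_mul _) hf_int, integral_const_mul, integral_mul_const] at key
  rw [Real.log_div hB.ne' hA.ne']
  rw [Real.log_div hA.ne' hB.ne', div_mul_cancel₀ A hB.ne'] at key
  linarith

noncomputable def densityOnIoi (f : ℝ → ℝ) : Measure ℝ :=
  (volume.restrict (Ioi 0)).withDensity fun x => ENNReal.ofReal (f x)

section
variable {f : ℝ → ℝ}

instance : NullSingletonClass (densityOnIoi f) := by
  unfold densityOnIoi; infer_instance

lemma setIntegral_mul_eq_integral_densityOnIoi (hf0 : ∀ x, 0 ≤ f x)
    (hfint : IntegrableOn f (Ioi 0)) (g : ℝ → ℝ) :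
    ∫ x in Ioi 0, f x * g x = ∫ x, g x ∂densityOnIoi f := by
  rw [densityOnIoi, integral_withDensity_eq_integral_toReal_smul₀
    hfint.aemeasurable.ennreal_ofReal (ae_of_all _ fun _ => ENNReal.ofReal_lt_top)]
  simp [ENNReal.toReal_ofReal (hf0 _)]

lemma integrableOn_mul_iff_integrable_densityOnIoi (hf0 : ∀ x, 0 ≤ f x)
    (hfint : IntegrableOn f (Ioi 0)) {g : ℝ → ℝ} :
    IntegrableOn (fun x => f x * g x) (Ioi 0) ↔ Integrable g (densityOnIoi f) := by
  rw [densityOnIoi, integrable_withDensity_iff_integrable_smul₀'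
    hfint.aemeasurable.ennreal_ofReal (ae_of_all _ fun _ => ENNReal.ofReal_lt_top)]
  simp [ENNReal.toReal_ofReal (hf0 _), IntegrableOn]

lemma ae_imp_of_ae_densityOnIoi (hfint : IntegrableOn f (Ioi 0)) {p : ℝ → Prop}
    (h : ∀ᵐ x ∂densityOnIoi f, p x) : ∀ᵐ x ∂volume.restrict (Ioi 0), 0 < f x → p x := by
  filter_upwards [(ae_withDensity_iff' hfint.aemeasurable.ennreal_ofReal).1 h] with x hx hfx
    using hx (ENNReal.ofReal_pos.2 hfx).ne'

lemma isProbabilityMeasure_densityOnIoi (hf0 : ∀ x, 0 ≤ f x) (hfint : IntegrableOn f (Ioi 0))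
    (hfprob : ∫ x in Ioi 0, f x = 1) : IsProbabilityMeasure (densityOnIoi f) := by
  constructor
  rw [densityOnIoi, withDensity_apply _ MeasurableSet.univ, Measure.restrict_univ,
    ← ofReal_integral_eq_lintegral_ofReal hfint (ae_of_all _ hf0), hfprob, ENNReal.ofReal_one]

lemma survival_densityOnIoi (hf0 : ∀ x, 0 ≤ f x) (hfint : IntegrableOn f (Ioi 0)) {x : ℝ}
    (hx : 0 ≤ x) : survival (densityOnIoi f) x = ∫ y in Ioi x, f y := by
  rw [survival, measureReal_def, densityOnIoi, withDensity_apply _ measurableSet_Ioi,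
    Measure.restrict_restrict measurableSet_Ioi, inter_eq_left.2 (Ioi_subset_Ioi hx),
    ← ofReal_integral_eq_lintegral_ofReal (hfint.mono_set (Ioi_subset_Ioi hx))
      (ae_of_all _ hf0),
    ENNReal.toReal_ofReal (setIntegral_nonneg measurableSet_Ioi fun y _ => hf0 y)]

lemma integral_mul_log_tail (hf0 : ∀ x, 0 ≤ f x) (hfint : IntegrableOn f (Ioi 0))
    (hfprob : ∫ x in Ioi 0, f x = 1) :
    ∫ x in Ioi 0, f x * Real.log (∫ y in Ioi x, f y) = -1 := by
  have := isProbabilityMeasure_densityOnIoi hf0 hfint hfprob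
  rw [← integral_log_survival (μ := densityOnIoi f),
    ← setIntegral_mul_eq_integral_densityOnIoi hf0 hfint]
  refine setIntegral_congr_fun measurableSet_Ioi fun x hx => ?_
  rw [survival_densityOnIoi hf0 hfint (le_of_lt hx)]

lemma integrableOn_mul_log_tail (hf0 : ∀ x, 0 ≤ f x) (hfint : IntegrableOn f (Ioi 0))
    (hfprob : ∫ x in Ioi 0, f x = 1) :
    IntegrableOn (fun x => f x * Real.log (∫ y in Ioi x, f y)) (Ioi 0) := by
  have := isProbabilityMeasure_densityOnIoi hf0 hfint hfprob
  refine ((integrableOn_mul_iff_integrable_densityOnIoi hf0 hfint).2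
    integrable_log_survival).congr_fun (fun x hx => ?_) measurableSet_Ioi
  simp only [survival_densityOnIoi hf0 hfint (le_of_lt hx)]

lemma ae_tail_pos (hf0 : ∀ x, 0 ≤ f x) (hfint : IntegrableOn f (Ioi 0))
    (hfprob : ∫ x in Ioi 0, f x = 1) :
    ∀ᵐ x ∂volume.restrict (Ioi 0), 0 < f x → 0 < ∫ y in Ioi x, f y := by
  have := isProbabilityMeasure_densityOnIoi hf0 hfint hfprob
  filter_upwards [ae_imp_of_ae_densityOnIoi hfint ae_survival_pos,
    ae_restrict_mem measurableSet_Ioi] with x hpos hx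
  rwa [← survival_densityOnIoi hf0 hfint (le_of_lt hx)]

end

theorem gwse_lower_bound_shannon_general (α β : ℝ)
    (hα2 : α < β)
    (f Fbar : ℝ → ℝ)
    (hf0 : ∀ x, 0 ≤ f x)
    (hfint : IntegrableOn f (Set.Ioi 0))
    (hfprob : ∫ x in Set.Ioi (0:ℝ), f x = 1)
    (hFbar : ∀ x, Fbar x = ∫ y in Set.Ioi x, f y)
    (hH : IntegrableOn (fun x => f x * Real.log (f x)) (Set.Ioi 0))
    (hlogX : IntegrableOn (fun x => f x * Real.log x) (Set.Ioi 0))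
    (hint : IntegrableOn (fun x => x * Fbar x ^ (α + β - 1)) (Set.Ioi 0))
    (hpos : 0 < ∫ x in Set.Ioi (0:ℝ), x * Fbar x ^ (α + β - 1)) :
    (β - α) * ((1 / (β - α)) *
        Real.log (∫ x in Set.Ioi (0:ℝ), x * Fbar x ^ (α + β - 1))) +
      (α + β - 1) ≥
      (-∫ x in Set.Ioi (0:ℝ), f x * Real.log (f x)) +
        ∫ x in Set.Ioi (0:ℝ), f x * Real.log x := by
  obtain rfl : Fbar = fun x => ∫ y in Ioi x, f y := funext hFbar
  set c := α + β - 1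
  have htail_pos := ae_tail_pos hf0 hfint hfprob
  have hsplit : ∀ᵐ x ∂volume.restrict (Ioi 0),
      f x * Real.log (x * (∫ y in Ioi x, f y) ^ c) =
        f x * Real.log x + c * (f x * Real.log (∫ y in Ioi x, f y)) := by
    filter_upwards [htail_pos, ae_restrict_mem measurableSet_Ioi] with x hT hx
    exact Real.mul_log_mul_rpow c hx fun hfx => hT ((hf0 x).lt_of_ne' hfx)
  have hlog_int := integrableOn_mul_log_tail hf0 hfint hfprob
  have hgibbs := integral_mul_log_sub_integral_mul_log_le (ae_of_all _ hf0)
    (ae_restrict_of_forall_mem measurableSet_Ioi fun x hx => mul_nonneg (le_of_lt hx)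
      (Real.rpow_nonneg (setIntegral_nonneg measurableSet_Ioi fun y _ => hf0 y) c))
    (by filter_upwards [htail_pos, ae_restrict_mem measurableSet_Ioi] with x hT hx hfx
        exact mul_pos hx (Real.rpow_pos_of_pos (hT hfx) c))
    hfint hint hH ((hlogX.add (hlog_int.const_mul c)).congr (hsplit.mono fun _ h => h.symm))
    (hfprob ▸ one_pos) hpos
  rw [integral_congr_ae hsplit, integral_add hlogX (hlog_int.const_mul c), integral_const_mul,
    integral_mul_log_tail hf0 hfint hfprob, hfprob, div_one, one_mul] at hgibbs
  rw [← mul_assoc, mul_one_div_cancel (sub_ne_zero.2 hα2.ne'), one_mul]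
  linarith

/-- a lower bound for the GWSE in terms of the Shannon entropy
`H(X) = −∫ f log f` and `E[log X]`:
`(β−α)·ξ^w_{α,β}(X) + (α+β−1) ≥ H(X) + E[log X]`. -/
theorem gwse_lower_bound_shannon (α β : ℝ)
    (hβ : 1 ≤ β) (hα1 : β - 1 < α) (hα2 : α < β)
    (f Fbar : ℝ → ℝ)
    (hf0 : ∀ x, 0 ≤ f x)
    (hfint : IntegrableOn f (Set.Ioi 0))
    (hfprob : ∫ x in Set.Ioi (0:ℝ), f x = 1)
    (hFbar : ∀ x, Fbar x = ∫ y in Set.Ioi x, f y)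
    (hH : IntegrableOn (fun x => f x * Real.log (f x)) (Set.Ioi 0))
    (hlogX : IntegrableOn (fun x => f x * Real.log x) (Set.Ioi 0))
    (hint : IntegrableOn (fun x => x * Fbar x ^ (α + β - 1)) (Set.Ioi 0))
    (hpos : 0 < ∫ x in Set.Ioi (0:ℝ), x * Fbar x ^ (α + β - 1)) :
    (β - α) * ((1 / (β - α)) *
        Real.log (∫ x in Set.Ioi (0:ℝ), x * Fbar x ^ (α + β - 1))) +
      (α + β - 1) ≥
      (-∫ x in Set.Ioi (0:ℝ), f x * Real.log (f x)) +
        ∫ x in Set.Ioi (0:ℝ), f x * Real.log x :=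
  gwse_lower_bound_shannon_general α β hα2 f Fbar hf0 hfint hfprob hFbar hH hlogX hint hpos
end

section
/- Let X be a non-negative random variable with support contained in [0, b], survival function F̄, and t < b with F̄(t) > 0. Then ξ^w_{α,β}(X;t) ≤ [∫_t^b h(x)·log h(x) dx] / [(β−α)·∫_t^b h(x) dx] + log(b−t)/(β−α), where h(x) = x·(F̄(x)/F̄(t))^{α+β−1}. -/
open MeasureTheory Set

/-! Jensen's inequality for the convex function `y ↦ y log y` under the normalised measure on
`(t, b]` is the continuous log-sum inequality `(∫ h) log ((∫ h) / (b - t)) ≤ ∫ h log h`;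
dividing by `(β - α) ∫ h > 0` gives the bound. -/

section LogSum

variable {Ω : Type*} [MeasurableSpace Ω] {μ : Measure Ω} [IsFiniteMeasure μ] {f : Ω → ℝ}

theorem integral_mul_log_integral_div_measureReal_le_integral_mul_log [NeZero μ] (hf0 : 0 ≤ᵐ[μ] f)
    (hf : Integrable f μ) (hflog : Integrable (fun x => f x * Real.log (f x)) μ) :
    (∫ x, f x ∂μ) * Real.log ((∫ x, f x ∂μ) / μ.real univ) ≤
      ∫ x, f x * Real.log (f x) ∂μ := by
  have hμ : 0 < μ.real univ := measureReal_univ_pos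
  have hjensen : (⨍ x, f x ∂μ) * Real.log (⨍ x, f x ∂μ) ≤ ⨍ x, f x * Real.log (f x) ∂μ :=
    Real.convexOn_mul_log.map_average_le Real.continuous_mul_log.continuousOn isClosed_Ici
      hf0 hf hflog
  rw [average_eq, average_eq, smul_eq_mul, smul_eq_mul, inv_mul_eq_div] at hjensen
  calc (∫ x, f x ∂μ) * Real.log ((∫ x, f x ∂μ) / μ.real univ)
      = μ.real univ * ((∫ x, f x ∂μ) / μ.real univ *
          Real.log ((∫ x, f x ∂μ) / μ.real univ)) := by field_simp
    _ ≤ μ.real univ * ((μ.real univ)⁻¹ * ∫ x, f x * Real.log (f x) ∂μ) := by gcongr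
    _ = ∫ x, f x * Real.log (f x) ∂μ := by field_simp

theorem log_integral_le_integral_mul_log_div_integral_add_log_measureReal (hf0 : 0 ≤ᵐ[μ] f)
    (hf : Integrable f μ) (hflog : Integrable (fun x => f x * Real.log (f x)) μ)
    (hpos : 0 < ∫ x, f x ∂μ) :
    Real.log (∫ x, f x ∂μ) ≤
      (∫ x, f x * Real.log (f x) ∂μ) / (∫ x, f x ∂μ) + Real.log (μ.real univ) := by
  have : NeZero μ := ⟨by rintro rfl; simp at hpos⟩
  have hlogsum := integral_mul_log_integral_div_measureReal_le_integral_mul_log hf0 hf hflog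
  rw [Real.log_div hpos.ne' measureReal_univ_pos.ne'] at hlogsum
  rw [← sub_le_iff_le_add, le_div_iff₀ hpos]
  linarith

end LogSum

theorem gdwse_upper_bound_general (α β t b : ℝ)
    (hα2 : α < β)
    (htb : t < b) (ht : 0 ≤ t)
    (Fbar : ℝ → ℝ)
    (hFrange : ∀ x, 0 ≤ Fbar x ∧ Fbar x ≤ 1)
    (hint : IntegrableOn (fun x => x * (Fbar x / Fbar t) ^ (α + β - 1)) (Set.Ioc t b))
    (hintlog : IntegrableOn
      (fun x => x * (Fbar x / Fbar t) ^ (α + β - 1) *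
        Real.log (x * (Fbar x / Fbar t) ^ (α + β - 1))) (Set.Ioc t b))
    (hpos : 0 < ∫ x in Set.Ioc t b, x * (Fbar x / Fbar t) ^ (α + β - 1)) :
    (1 / (β - α)) * Real.log (∫ x in Set.Ioc t b, x * (Fbar x / Fbar t) ^ (α + β - 1)) ≤
      (∫ x in Set.Ioc t b, x * (Fbar x / Fbar t) ^ (α + β - 1) *
          Real.log (x * (Fbar x / Fbar t) ^ (α + β - 1))) /
        ((β - α) * ∫ x in Set.Ioc t b, x * (Fbar x / Fbar t) ^ (α + β - 1)) +
      Real.log (b - t) / (β - α) := by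
  have hnonneg : 0 ≤ᵐ[volume.restrict (Ioc t b)]
      fun x => x * (Fbar x / Fbar t) ^ (α + β - 1) := by
    filter_upwards [ae_restrict_mem measurableSet_Ioc] with x hx
    exact mul_nonneg (ht.trans hx.1.le)
      (Real.rpow_nonneg (div_nonneg (hFrange x).1 (hFrange t).1) _)
  have hlogsum :=
    log_integral_le_integral_mul_log_div_integral_add_log_measureReal hnonneg hint hintlog hpos
  rw [measureReal_restrict_apply_univ, Real.volume_real_Ioc_of_le htb.le] at hlogsum
  have hβα : 0 < β - α := sub_pos.mpr hα2
  calc _ ≤ 1 / (β - α) * ((∫ x in Ioc t b, x * (Fbar x / Fbar t) ^ (α + β - 1) *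
          Real.log (x * (Fbar x / Fbar t) ^ (α + β - 1))) /
        (∫ x in Ioc t b, x * (Fbar x / Fbar t) ^ (α + β - 1)) + Real.log (b - t)) := by
        gcongr
    _ = _ := by field_simp

/-- upper bound for the GDWSE of a random variable with support in
`[0,b]`, via the log-sum inequality, where `h(x) = x·(F̄(x)/F̄(t))^{α+β−1}`. -/
theorem gdwse_upper_bound (α β t b : ℝ)
    (hβ : 1 ≤ β) (hα1 : β - 1 < α) (hα2 : α < β)
    (htb : t < b) (ht : 0 ≤ t)
    (Fbar : ℝ → ℝ)
    (hFrange : ∀ x, 0 ≤ Fbar x ∧ Fbar x ≤ 1)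
    (hFanti : Antitone Fbar)
    (hsupp : ∀ x, b < x → Fbar x = 0)
    (hFt : 0 < Fbar t)
    (hint : IntegrableOn (fun x => x * (Fbar x / Fbar t) ^ (α + β - 1)) (Set.Ioc t b))
    (hintlog : IntegrableOn
      (fun x => x * (Fbar x / Fbar t) ^ (α + β - 1) *
        Real.log (x * (Fbar x / Fbar t) ^ (α + β - 1))) (Set.Ioc t b))
    (hpos : 0 < ∫ x in Set.Ioc t b, x * (Fbar x / Fbar t) ^ (α + β - 1)) :
    (1 / (β - α)) * Real.log (∫ x in Set.Ioc t b, x * (Fbar x / Fbar t) ^ (α + β - 1)) ≤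
      (∫ x in Set.Ioc t b, x * (Fbar x / Fbar t) ^ (α + β - 1) *
          Real.log (x * (Fbar x / Fbar t) ^ (α + β - 1))) /
        ((β - α) * ∫ x in Set.Ioc t b, x * (Fbar x / Fbar t) ^ (α + β - 1)) +
      Real.log (b - t) / (β - α) :=
  gdwse_upper_bound_general α β t b hα2 htb ht Fbar hFrange hint hintlog hpos
end
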